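/- Let D be a diagonal matrix with positive diagonal entries and B a nonnegative matrix. Then the spectral radius ρ(D⁻¹B) < 1 if and only if the spectral abscissa μ(−D + B) < 0. -/

import Mathlib

/-!
For a nonnegative matrix `K` and a complex eigenpair `K x = λ x`, the triangle inequality gives
`|λ| |x| ≤ K |x|` entrywise. In the other direction, a nonnegative `y ≠ 0` with `y ≤ K y` forces
an eigenvalue of modulus at least `1`: otherwise `Kᵏ → 0` by Gelfand's formula, while `y ≤ Kᵏ y`
for all `k`.

An eigenpair `(μ, x)` of `-D + B` with `Re μ ≥ 0`, and an eigenpair `(λ, x)` of `D⁻¹B` with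
`|λ| ≥ 1`, both give `D |x| ≤ B |x|`. In the first case this says `|x| ≤ D⁻¹B |x|`. In the second
it says `(-D + B) |x| ≥ 0`; then `I + s (-D + B)` is nonnegative and subinvariant at `|x|` for
small `s > 0`, so it has an eigenvalue `1 + s μ` of modulus at least `1`, which is impossible for
small `s` when every eigenvalue `μ` of `-D + B` has `Re μ < 0`.
-/

open Matrix Filter Topology

theorem Matrix.mem_spectrum_iff_exists_mulVec_eq_smul {R n : Type*} [Field R] [Fintype n]
    [DecidableEq n] (A : Matrix n n R) (μ : R) :
    μ ∈ spectrum R A ↔ ∃ x ≠ 0, A *ᵥ x = μ • x := by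
  simp only [← Matrix.spectrum_toLin', ← Module.End.hasEigenvalue_iff_mem_spectrum,
    Module.End.hasEigenvalue_iff, Submodule.ne_bot_iff, Module.End.mem_eigenspace_iff,
    Matrix.toLin'_apply, and_comm]

theorem Matrix.mulVec_mono {R m n : Type*} [Fintype n] [Semiring R] [PartialOrder R]
    [IsOrderedRing R] {K : Matrix m n R} (hK : ∀ i j, 0 ≤ K i j) {u v : n → R} (huv : u ≤ v) :
    K *ᵥ u ≤ K *ᵥ v :=
  fun i => Finset.sum_le_sum fun j _ => mul_le_mul_of_nonneg_left (huv j) (hK i j)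

theorem Matrix.norm_mulVec_map_ofReal_le {m n : Type*} [Fintype n] {K : Matrix m n ℝ}
    (hK : ∀ i j, 0 ≤ K i j) (x : n → ℂ) (i : m) :
    ‖(K.map Complex.ofReal *ᵥ x) i‖ ≤ (K *ᵥ fun j => ‖x j‖) i := by
  refine (norm_sum_le _ _).trans_eq (Finset.sum_congr rfl fun j _ => ?_)
  simp only [map_apply, norm_mul, Complex.norm_real, Real.norm_of_nonneg (hK i j)]

theorem tendsto_pow_nhds_zero_of_spectralRadius_lt_one {A : Type*} [NormedRing A]
    [NormedAlgebra ℂ A] [CompleteSpace A] {a : A} (ha : spectralRadius ℂ a < 1) :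
    Tendsto (a ^ ·) atTop (𝓝 0) := by
  obtain ⟨t, hat, ht1⟩ := ENNReal.lt_iff_exists_nnreal_btwn.mp ha
  have hbound : ∀ᶠ k : ℕ in atTop, ‖a ^ k‖ ≤ (t : ℝ) ^ k := by
    filter_upwards [(spectrum.pow_nnnorm_pow_one_div_tendsto_nhds_spectralRadius a)
      |>.eventually_lt_const hat, eventually_ge_atTop 1] with k hk hk1
    have hk0 : (0 : ℝ) < k := by exact_mod_cast hk1
    rw [one_div, ← ENNReal.coe_rpow_of_nonneg _ (inv_nonneg.mpr hk0.le), ENNReal.coe_lt_coe,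
      NNReal.rpow_inv_lt_iff hk0, NNReal.rpow_natCast] at hk
    exact_mod_cast hk.le
  exact squeeze_zero_norm' hbound
    (tendsto_pow_atTop_nhds_zero_of_lt_one t.2 (by exact_mod_cast ht1))

theorem Matrix.le_pow_mulVec_of_le_mulVec {R n : Type*} [Fintype n] [DecidableEq n] [Semiring R]
    [PartialOrder R] [IsOrderedRing R] {K : Matrix n n R} (hK : ∀ i j, 0 ≤ K i j) {y : n → R}
    (hKy : y ≤ K *ᵥ y) (k : ℕ) : y ≤ K ^ k *ᵥ y := by
  induction k with
  | zero => simp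
  | succ k ih =>
    rw [pow_succ', ← mulVec_mulVec]
    exact hKy.trans (mulVec_mono hK ih)

section LinftyOpNorm

attribute [local instance] Matrix.linftyOpNormedRing Matrix.linftyOpNormedAlgebra

theorem Matrix.exists_mem_spectrum_one_le_norm_of_le_mulVec {n : Type*} [Fintype n]
    [DecidableEq n] {K : Matrix n n ℝ} (hK : ∀ i j, 0 ≤ K i j) {y : n → ℝ} (hy : 0 ≤ y)
    (hy0 : y ≠ 0) (hKy : y ≤ K *ᵥ y) : ∃ ν ∈ spectrum ℂ (K.map Complex.ofReal), 1 ≤ ‖ν‖ := by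
  obtain ⟨i, hi⟩ := Function.ne_iff.mp hy0
  have : Nonempty n := ⟨i⟩
  have : CompleteSpace (Matrix n n ℂ) := FiniteDimensional.complete ℂ _
  by_contra! hlt
  have hρ : spectralRadius ℂ (K.map Complex.ofReal) < 1 := by
    exact_mod_cast spectrum.spectralRadius_lt_of_forall_lt _ (r := 1) fun z hz => by
      exact_mod_cast hlt z hz
  have hpow : ∀ k : ℕ,
      (K ^ k *ᵥ y) i = ((K.map Complex.ofReal ^ k *ᵥ (Complex.ofReal ∘ y)) i).re := by
    intro k
    have hmap : (K.map Complex.ofReal) ^ k = (K ^ k).map Complex.ofReal :=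
      (map_pow Complex.ofRealHom.mapMatrix K k).symm
    rw [hmap]
    exact congrArg Complex.re (RingHom.map_mulVec Complex.ofRealHom _ y i)
  have hlim : Tendsto (fun k : ℕ => (K ^ k *ᵥ y) i) atTop (𝓝 0) := by
    have hcont : Continuous fun M : Matrix n n ℂ => ((M *ᵥ (Complex.ofReal ∘ y)) i).re := by
      fun_prop
    simp only [hpow]
    convert (hcont.tendsto 0).comp (tendsto_pow_nhds_zero_of_spectralRadius_lt_one hρ) using 2
    · rfl
    -- the `0` here is the zero of the operator-norm ring structure, invisible to `simp`
    · exact (congrArg Complex.re (congrFun (zero_mulVec (m := n) (Complex.ofReal ∘ y)) i)).symm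
  have hyi : y i ≤ 0 := ge_of_tendsto' hlim fun k => le_pow_mulVec_of_le_mulVec hK hKy k i
  exact hi (le_antisymm hyi (hy i))

end LinftyOpNorm

theorem Complex.eventually_norm_one_add_mul_lt_one {μ : ℂ} (hμ : μ.re < 0) :
    ∀ᶠ s : ℝ in 𝓝[>] 0, ‖1 + s * μ‖ < 1 := by
  have hlin : ∀ᶠ s : ℝ in 𝓝 0, 2 * μ.re + s * ‖μ‖ ^ 2 < 0 := by
    have : Tendsto (fun s : ℝ => 2 * μ.re + s * ‖μ‖ ^ 2) (𝓝 0) (𝓝 (2 * μ.re)) := by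
      simpa using ((tendsto_id (x := 𝓝 (0 : ℝ))).mul_const (‖μ‖ ^ 2)).const_add (2 * μ.re)
    exact this.eventually_lt_const (by linarith)
  filter_upwards [self_mem_nhdsWithin, nhdsWithin_le_nhds hlin] with s (hs : 0 < s) hs'
  have hsq : ‖1 + s * μ‖ ^ 2 = 1 + s * (2 * μ.re + s * ‖μ‖ ^ 2) := by
    simp only [Complex.sq_norm, Complex.normSq_apply, Complex.add_re, Complex.add_im,
      Complex.mul_re, Complex.mul_im, Complex.ofReal_re, Complex.ofReal_im, Complex.one_re,
      Complex.one_im]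
    ring
  rw [← sq_lt_one_iff₀ (norm_nonneg _), hsq]
  nlinarith

theorem Matrix.exists_mem_spectrum_re_nonneg_of_nonneg_mulVec {n : Type*} [Fintype n]
    [DecidableEq n] {M : Matrix n n ℝ} (hM : ∀ i j, i ≠ j → 0 ≤ M i j) {y : n → ℝ} (hy : 0 ≤ y)
    (hy0 : y ≠ 0) (hMy : 0 ≤ M *ᵥ y) : ∃ μ ∈ spectrum ℂ (M.map Complex.ofReal), 0 ≤ μ.re := by
  by_contra! hneg
  have hdiag : ∀ i, ∀ᶠ s : ℝ in 𝓝 0, 0 < 1 + s * M i i := fun i => by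
    have : Tendsto (fun s : ℝ => 1 + s * M i i) (𝓝 0) (𝓝 1) := by
      simpa using ((tendsto_id (x := 𝓝 (0 : ℝ))).mul_const (M i i)).const_add 1
    exact this.eventually_const_lt one_pos
  obtain ⟨s, hs, hdiag, hball⟩ : ∃ s : ℝ, 0 < s ∧ (∀ i, 0 < 1 + s * M i i) ∧
      ∀ μ ∈ spectrum ℂ (M.map Complex.ofReal), ‖1 + s * μ‖ < 1 :=
    ((eventually_mem_nhdsWithin (s := Set.Ioi 0) (a := 0)).and
      (((eventually_all.mpr hdiag).filter_mono nhdsWithin_le_nhds).and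
      ((finite_spectrum _).eventually_all.mpr fun μ hμ =>
        Complex.eventually_norm_one_add_mul_lt_one (hneg μ hμ)))).exists
  have hK : ∀ i j, 0 ≤ (1 + s • M) i j := by
    intro i j
    rcases eq_or_ne i j with rfl | hij
    · simpa using (hdiag i).le
    · simpa [one_apply_ne hij] using mul_nonneg hs.le (hM i j hij)
  have hKy : y ≤ (1 + s • M) *ᵥ y := by
    rw [add_mulVec, one_mulVec, smul_mulVec]
    exact le_add_of_nonneg_right (smul_nonneg hs.le hMy)
  obtain ⟨κ, hκ, hκ1⟩ := exists_mem_spectrum_one_le_norm_of_le_mulVec hK hy hy0 hKy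
  have hmap : (1 + s • M).map Complex.ofReal =
      algebraMap ℂ _ 1 + (Units.mk0 (s : ℂ) (by exact_mod_cast hs.ne')) • M.map Complex.ofReal := by
    ext i j
    rcases eq_or_ne i j with rfl | hij <;> simp [one_apply_ne, *]
  rw [hmap, ← spectrum.singleton_add_eq, spectrum.unit_smul_eq_smul] at hκ
  obtain ⟨_, rfl, _, ⟨μ, hμ, rfl⟩, rfl⟩ := hκ
  exact (hball μ hμ).not_ge (by simpa using hκ1)

theorem Matrix.inv_diagonal_of_ne_zero {K n : Type*} [Field K] [Fintype n] [DecidableEq n]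
    {d : n → K} (hd : ∀ i, d i ≠ 0) : (diagonal d)⁻¹ = diagonal d⁻¹ :=
  inv_eq_left_inv (by simp [diagonal_mul_diagonal, inv_mul_cancel₀ (hd _)])

theorem Matrix.mul_norm_le_mulVec_norm_of_mulVec_apply_eq {n : Type*} [Fintype n]
    {K : Matrix n n ℝ} (hK : ∀ i j, 0 ≤ K i j) {x : n → ℂ} {i : n} {c : ℂ} {r : ℝ}
    (hKx : (K.map Complex.ofReal *ᵥ x) i = c * x i) (hr : r ≤ ‖c‖) :
    r * ‖x i‖ ≤ (K *ᵥ fun j => ‖x j‖) i :=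
  calc r * ‖x i‖ ≤ ‖c‖ * ‖x i‖ := mul_le_mul_of_nonneg_right hr (norm_nonneg _)
    _ = ‖(K.map Complex.ofReal *ᵥ x) i‖ := by rw [hKx, norm_mul]
    _ ≤ (K *ᵥ fun j => ‖x j‖) i := norm_mulVec_map_ofReal_le hK x i

section DiagonalNonneg

variable {n : Type*} [Fintype n] [DecidableEq n] {d : n → ℝ} {B : Matrix n n ℝ}

theorem exists_one_le_norm_mem_spectrum_inv_diagonal_mul_of_re_nonneg (hd : ∀ i, 0 < d i)
    (hB : ∀ i j, 0 ≤ B i j) {μ : ℂ}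
    (hμ : μ ∈ spectrum ℂ ((-diagonal d + B).map Complex.ofReal)) (hre : 0 ≤ μ.re) :
    ∃ ν ∈ spectrum ℂ (((diagonal d)⁻¹ * B).map Complex.ofReal), 1 ≤ ‖ν‖ := by
  obtain ⟨x, hx0, hx⟩ := (mem_spectrum_iff_exists_mulVec_eq_smul _ μ).mp hμ
  have hmap : (-diagonal d + B).map Complex.ofReal =
      -diagonal (fun i => (d i : ℂ)) + B.map Complex.ofReal := by
    ext i j
    rcases eq_or_ne i j with rfl | hij <;> simp [*]
  have hBx : ∀ i, (B.map Complex.ofReal *ᵥ x) i = (μ + d i) * x i := fun i => by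
    have := congrFun hx i
    rw [hmap, add_mulVec, neg_mulVec, Pi.add_apply, Pi.neg_apply, mulVec_diagonal,
      Pi.smul_apply, smul_eq_mul] at this
    linear_combination this
  rw [inv_diagonal_of_ne_zero fun i => (hd i).ne']
  refine exists_mem_spectrum_one_le_norm_of_le_mulVec (fun i j => ?_) (fun j => norm_nonneg _)
    (fun h => hx0 (funext fun j => norm_eq_zero.mp (congrFun h j))) (fun i => ?_)
  · rw [diagonal_mul]
    exact mul_nonneg (inv_nonneg.mpr (hd i).le) (hB i j)
  · rw [← mulVec_mulVec, mulVec_diagonal, Pi.inv_apply, le_inv_mul_iff₀ (hd i)]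
    refine mul_norm_le_mulVec_norm_of_mulVec_apply_eq hB (hBx i) ?_
    have := Complex.re_le_norm (μ + d i)
    rw [Complex.add_re, Complex.ofReal_re] at this
    linarith

theorem exists_re_nonneg_mem_spectrum_neg_diagonal_add_of_one_le_norm (hd : ∀ i, 0 < d i)
    (hB : ∀ i j, 0 ≤ B i j) {ν : ℂ}
    (hν : ν ∈ spectrum ℂ (((diagonal d)⁻¹ * B).map Complex.ofReal)) (hν1 : 1 ≤ ‖ν‖) :
    ∃ μ ∈ spectrum ℂ ((-diagonal d + B).map Complex.ofReal), 0 ≤ μ.re := by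
  obtain ⟨x, hx0, hx⟩ := (mem_spectrum_iff_exists_mulVec_eq_smul _ ν).mp hν
  have hBx : ∀ i, (B.map Complex.ofReal *ᵥ x) i = (ν * d i) * x i := fun i => by
    have hmap : ((diagonal d)⁻¹ * B).map Complex.ofReal =
        diagonal (fun i => (d i : ℂ)⁻¹) * B.map Complex.ofReal := by
      ext i j
      simp [inv_diagonal_of_ne_zero fun i => (hd i).ne', diagonal_mul]
    have := congrFun hx i
    rw [hmap, ← mulVec_mulVec, mulVec_diagonal, Pi.smul_apply, smul_eq_mul] at this
    have hdi : (d i : ℂ) ≠ 0 := by exact_mod_cast (hd i).ne'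
    field_simp at this
    linear_combination this
  refine exists_mem_spectrum_re_nonneg_of_nonneg_mulVec (fun i j hij => ?_)
    (fun j => norm_nonneg _) (fun h => hx0 (funext fun j => norm_eq_zero.mp (congrFun h j)))
    (fun i => ?_)
  · simpa [diagonal_apply_ne _ hij] using hB i j
  · rw [add_mulVec, neg_mulVec, Pi.add_apply, Pi.neg_apply, mulVec_diagonal, Pi.zero_apply,
      le_neg_add_iff_le]
    refine mul_norm_le_mulVec_norm_of_mulVec_apply_eq hB (hBx i) ?_
    rw [norm_mul, Complex.norm_real, Real.norm_of_nonneg (hd i).le]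
    exact le_mul_of_one_le_left (hd i).le hν1

end DiagonalNonneg

/-- With `D` diagonal positive and `B ≥ 0`, the spectral radius of
`D⁻¹B` is `< 1` iff the spectral abscissa of `−D + B` is `< 0`. -/
theorem stmt8 (n : ℕ) (d : Fin n → ℝ) (hd : ∀ i, 0 < d i)
    (B : Matrix (Fin n) (Fin n) ℝ) (hB : ∀ i j, 0 ≤ B i j) :
    (∀ μ ∈ spectrum ℂ (((Matrix.diagonal d)⁻¹ * B).map Complex.ofReal),
        ‖μ‖ < 1) ↔
      (∀ μ ∈ spectrum ℂ ((-(Matrix.diagonal d) + B).map Complex.ofReal),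
        μ.re < 0) := by
  constructor
  · intro hρ μ hμ
    by_contra! hre
    obtain ⟨ν, hν, hν1⟩ :=
      exists_one_le_norm_mem_spectrum_inv_diagonal_mul_of_re_nonneg hd hB hμ hre
    exact (hρ ν hν).not_ge hν1
  · intro habs ν hν
    by_contra! hν1
    obtain ⟨μ, hμ, hre⟩ :=
      exists_re_nonneg_mem_spectrum_neg_diagonal_add_of_one_le_norm hd hB hν hν1
    exact (habs μ hμ).not_ge hre
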